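/- Let N = e·m where e = 2^f with f ≥ 1 and m is an odd integer with m > 1. Let c be an integer with c ≡ 0 (mod e) and c ≡ 1 (mod m), and set a = L^c and b = R^c in SL(2,ℤ). Then the element (a·b⁻¹·a)²·((b⁻¹·a)³)⁻¹ lies in Γ(N). -/

import Mathlib

open Matrix CongruenceSubgroup

local notation "SL2Z" => Matrix.SpecialLinearGroup (Fin 2) ℤ

/-- The matrix `L = [[1,0],[1,1]]` as an element of `SL(2, ℤ)`. -/
def L : SL2Z := ⟨!![1, 0; 1, 1], by norm_num [Matrix.det_fin_two_of]⟩

/-- The matrix `R = [[1,1],[0,1]]` as an element of `SL(2, ℤ)`. -/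
def R : SL2Z := ⟨!![1, 1; 0, 1], by norm_num [Matrix.det_fin_two_of]⟩

/-! With `a = L^c`, `b = R^c`, every entry of `(a b⁻¹ a)² ((b⁻¹ a)³)⁻¹ - 1` is an integer
polynomial in `c` divisible by `c (c - 1)`, and `2^f m ∣ c (c - 1)` because `2^f ∣ c` and
`m ∣ c - 1`. -/

lemma coe_L_zpow (n : ℤ) : ((L ^ n : SL2Z) : Matrix (Fin 2) (Fin 2) ℤ) = !![1, 0; n, 1] := by
  induction n using Int.induction_on with
  | zero => simp [one_fin_two]
  | succ n ih =>
    simp only [_root_.zpow_add_one, Matrix.SpecialLinearGroup.coe_mul, ih]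
    simp [L]
  | pred n ih =>
    simp only [_root_.zpow_sub_one, Matrix.SpecialLinearGroup.coe_mul, ih,
      Matrix.SpecialLinearGroup.coe_inv]
    simp [L, adjugate_fin_two, sub_eq_add_neg]

lemma coe_R_zpow (n : ℤ) : ((R ^ n : SL2Z) : Matrix (Fin 2) (Fin 2) ℤ) = !![1, n; 0, 1] := by
  induction n using Int.induction_on with
  | zero => simp [one_fin_two]
  | succ n ih =>
    simp only [_root_.zpow_add_one, Matrix.SpecialLinearGroup.coe_mul, ih]
    simp [R, add_comm]
  | pred n ih =>
    simp only [_root_.zpow_sub_one, Matrix.SpecialLinearGroup.coe_mul, ih,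
      Matrix.SpecialLinearGroup.coe_inv]
    simp [R, adjugate_fin_two, sub_eq_add_neg, add_comm]

lemma relator_eq {G : Type*} [Group G] (a b : G) :
    (a * b⁻¹ * a) ^ 2 * ((b⁻¹ * a) ^ 3)⁻¹ = a * b⁻¹ * a * b * a⁻¹ * b := by
  simp only [pow_succ, pow_zero, one_mul, _root_.mul_inv_rev]
  group

lemma coe_relator_L_zpow_R_zpow (c : ℤ) :
    (((L ^ c * (R ^ c)⁻¹ * L ^ c) ^ 2 * (((R ^ c)⁻¹ * L ^ c) ^ 3)⁻¹ : SL2Z) :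
      Matrix (Fin 2) (Fin 2) ℤ) =
      1 + (c * (c - 1)) • !![c * (c + 1), (c + 1) * (c ^ 2 - 1);
        (c + 1) * (c ^ 2 - 1), c * (c + 1) * (c ^ 2 - 2)] := by
  rw [relator_eq, ← _root_.zpow_neg, ← _root_.zpow_neg]
  simp only [Matrix.SpecialLinearGroup.coe_mul, coe_L_zpow, coe_R_zpow, mul_fin_two]
  ext i j
  fin_cases i <;> fin_cases j <;> simp <;> ring

lemma mem_Gamma_of_coe_eq_one_add_smul {N : ℕ} {γ : SL2Z} {k : ℤ}
    {M : Matrix (Fin 2) (Fin 2) ℤ} (hγ : (γ : Matrix (Fin 2) (Fin 2) ℤ) = 1 + k • M)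
    (hk : (N : ℤ) ∣ k) : γ ∈ Gamma N := by
  have hk0 : (k : ZMod N) = 0 := (ZMod.intCast_zmod_eq_zero_iff_dvd k N).mpr hk
  rw [Gamma_mem', Matrix.SpecialLinearGroup.ext_iff]
  intro i j
  simp only [Matrix.SpecialLinearGroup.map_apply_coe, RingHom.mapMatrix_apply, Matrix.map_apply,
    hγ, Matrix.add_apply, Matrix.smul_apply, smul_eq_mul, map_add, map_mul, eq_intCast, hk0,
    zero_mul, add_zero]
  by_cases hij : i = j <;> simp [hij, one_apply]

theorem stmt_6_general (f : ℕ) (m : ℕ)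
    (c : ℤ) (hc0 : c ≡ 0 [ZMOD ((2 : ℤ) ^ f)]) (hc1 : c ≡ 1 [ZMOD (m : ℤ)])
    (a b : SL2Z) (ha : a = L ^ c) (hb : b = R ^ c) :
    (a * b⁻¹ * a) ^ 2 * ((b⁻¹ * a) ^ 3)⁻¹ ∈ Gamma (2 ^ f * m) := by
  subst ha hb
  refine mem_Gamma_of_coe_eq_one_add_smul (coe_relator_L_zpow_R_zpow c) ?_
  push_cast
  exact mul_dvd_mul (Int.modEq_zero_iff_dvd.mp hc0) hc1.symm.dvd

theorem stmt_6 (f : ℕ) (hf : 1 ≤ f) (m : ℕ) (hmodd : Odd m) (hm1 : 1 < m)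
    (c : ℤ) (hc0 : c ≡ 0 [ZMOD ((2 : ℤ) ^ f)]) (hc1 : c ≡ 1 [ZMOD (m : ℤ)])
    (a b : SL2Z) (ha : a = L ^ c) (hb : b = R ^ c) :
    (a * b⁻¹ * a) ^ 2 * ((b⁻¹ * a) ^ 3)⁻¹ ∈ Gamma (2 ^ f * m) :=
  stmt_6_general f m c hc0 hc1 a b ha hb
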